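/- If all true class probabilities π_{0k}(x) are bounded below by c > 0 on a set 𝒳_0 of X-probability 1 and all π_k are bounded below by c on 𝒳_0, then max{K(π_0, π), V(π_0, π)} ≤ C Σ_{k=1}^K sup_{x ∈ 𝒳_0} |π_k(x) - π_{0k}(x)|² for a constant C depending only on c and K, where K(π_0,π) = E_X Σ_k π_{0k}(X) log(π_{0k}(X)/π_k(X)) and V(π_0,π) = E_X Σ_k π_{0k}(X) log²(π_{0k}(X)/π_k(X)). -/

import Mathlib

open MeasureTheory

private lemma log_div_le_aux {a b : ℝ} (ha : 0 < a) (hb : 0 < b) :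
    Real.log (b / a) ≤ (b - a) / a := by
  have h := Real.log_le_sub_one_of_pos (div_pos hb ha)
  have e : b / a - 1 = (b - a) / a := by field_simp
  linarith

private lemma abs_log_div_le_aux {a b c : ℝ} (hc : 0 < c) (ha : c ≤ a) (hb : c ≤ b) :
    |Real.log (b / a)| ≤ |b - a| / c := by
  have ha0 : 0 < a := lt_of_lt_of_le hc ha
  have hb0 : 0 < b := lt_of_lt_of_le hc hb
  rw [abs_le]
  constructor
  · have h1 : Real.log (a / b) ≤ (a - b) / b := log_div_le_aux hb0 ha0
    have h2 : (a - b) / b ≤ |b - a| / c :=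
      div_le_div₀ (abs_nonneg _) (by rw [abs_sub_comm]; exact le_abs_self _) hc hb
    have e : Real.log (a / b) = - Real.log (b / a) := by
      rw [Real.log_div ha0.ne' hb0.ne', Real.log_div hb0.ne' ha0.ne']; ring
    linarith
  · have h1 : Real.log (b / a) ≤ (b - a) / a := log_div_le_aux ha0 hb0
    have h2 : (b - a) / a ≤ |b - a| / c :=
      div_le_div₀ (abs_nonneg _) (le_abs_self _) hc ha
    linarith

/-- If the class probabilities are bounded below by c > 0 on a set 𝒳₀ of
X-probability one, then max{K(π₀,π), V(π₀,π)} is bounded by a constant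
(depending only on c and K) times ∑_k sup_{x ∈ 𝒳₀} |π_k(x) - π_{0k}(x)|². -/
theorem stmt_9 {𝓧 : Type*} [MeasurableSpace 𝓧] (K : ℕ) (c : ℝ) (hc : 0 < c) :
    ∃ C : ℝ, 0 < C ∧
      ∀ (G : Measure 𝓧), IsProbabilityMeasure G →
      ∀ (π π0 : Fin K → 𝓧 → ℝ) (X0 : Set 𝓧),
        MeasurableSet X0 → G X0 = 1 →
        (∀ k, Measurable (π k)) → (∀ k, Measurable (π0 k)) →
        (∀ k x, x ∈ X0 → c ≤ π k x) → (∀ k x, x ∈ X0 → c ≤ π0 k x) →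
        (∀ k x, x ∈ X0 → π k x ≤ 1) → (∀ k x, x ∈ X0 → π0 k x ≤ 1) →
        (∀ x, x ∈ X0 → ∑ k, π k x = 1) → (∀ x, x ∈ X0 → ∑ k, π0 k x = 1) →
        max (∫ x, ∑ k, π0 k x * Real.log (π0 k x / π k x) ∂G)
            (∫ x, ∑ k, π0 k x * (Real.log (π0 k x / π k x)) ^ 2 ∂G)
          ≤ C * ∑ k, (⨆ x ∈ X0, |π k x - π0 k x|) ^ 2 := by
  refine ⟨1 / c + 1 / c ^ 2, by positivity, ?_⟩
  intro G hG π π0 X0 hX0m hX0 hπm hπ0m hπc hπ0c hπ1 hπ01 hπs hπ0s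
  set S : Fin K → ℝ := fun k => ⨆ x ∈ X0, |π k x - π0 k x| with hSdef
  have hSnn : ∀ k, 0 ≤ S k := fun k =>
    Real.iSup_nonneg fun x => Real.iSup_nonneg fun _ => abs_nonneg _
  have hSle : ∀ k x, x ∈ X0 → |π k x - π0 k x| ≤ S k := by
    intro k x hx
    have hb : BddAbove (Set.range fun y => ⨆ _ : y ∈ X0, |π k y - π0 k y|) := by
      refine ⟨1, ?_⟩
      rintro _ ⟨y, rfl⟩
      refine Real.iSup_le (fun hy => ?_) zero_le_one
      have h1 := hπc k y hy
      have h2 := hπ0c k y hy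
      have h3 := hπ1 k y hy
      have h4 := hπ01 k y hy
      rw [abs_le]; constructor <;> linarith
    have h : (⨆ _ : x ∈ X0, |π k x - π0 k x|) ≤ S k := le_ciSup hb x
    rwa [ciSup_pos hx] at h
  set M : ℝ := ∑ k, S k ^ 2 with hMdef
  have hMnn : 0 ≤ M := Finset.sum_nonneg fun k _ => sq_nonneg _
  -- a.e. membership in X0
  have hae : ∀ᵐ x ∂G, x ∈ X0 := by
    have hcompl : G X0ᶜ = 0 := by
      have h := measure_compl hX0m (measure_ne_top G X0)
      rw [hX0, hG.measure_univ] at h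
      simpa using h
    rw [MeasureTheory.ae_iff]
    exact hcompl
  -- pointwise bounds on X0
  have hlog : ∀ k x, x ∈ X0 → |Real.log (π0 k x / π k x)| ≤ |π k x - π0 k x| / c := by
    intro k x hx
    have h := abs_log_div_le_aux hc (hπc k x hx) (hπ0c k x hx)
    rwa [abs_sub_comm] at h
  have hdiff1 : ∀ k x, x ∈ X0 → |π k x - π0 k x| ≤ 1 := by
    intro k x hx
    have h1 := hπc k x hx
    have h2 := hπ0c k x hx
    have h3 := hπ1 k x hx
    have h4 := hπ01 k x hx
    rw [abs_le]; constructor <;> linarith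
  -- bound on K integrand
  have hKpt : ∀ x, x ∈ X0 →
      (∑ k, π0 k x * Real.log (π0 k x / π k x)) ≤ (1 / c) * M := by
    intro x hx
    have hsum : (∑ k, π0 k x * Real.log (π0 k x / π k x)) =
        ∑ k, (π0 k x * Real.log (π0 k x / π k x) - (π0 k x - π k x)) := by
      rw [Finset.sum_sub_distrib, Finset.sum_sub_distrib, hπs x hx, hπ0s x hx]
      ring
    rw [hsum]
    have hterm : ∀ k ∈ Finset.univ,
        π0 k x * Real.log (π0 k x / π k x) - (π0 k x - π k x) ≤ S k ^ 2 / c := by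
      intro k _
      set a := π k x
      set b := π0 k x
      have ha : c ≤ a := hπc k x hx
      have hb : c ≤ b := hπ0c k x hx
      have ha0 : 0 < a := lt_of_lt_of_le hc ha
      have hL : Real.log (b / a) ≤ (b - a) / a := log_div_le_aux ha0 (lt_of_lt_of_le hc hb)
      have h1 : b * Real.log (b / a) ≤ b * ((b - a) / a) :=
        mul_le_mul_of_nonneg_left hL (by linarith)
      have h2 : b * ((b - a) / a) - (b - a) = (b - a) ^ 2 / a := by
        field_simp
      have h3 : (b - a) ^ 2 / a ≤ (b - a) ^ 2 / c :=
        div_le_div₀ (sq_nonneg _) le_rfl hc ha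
      have h4 : (b - a) ^ 2 ≤ S k ^ 2 := by
        have := hSle k x hx
        have habs : |b - a| ≤ S k := by rwa [abs_sub_comm] at this
        calc (b - a) ^ 2 = |b - a| ^ 2 := (sq_abs _).symm
          _ ≤ S k ^ 2 := by nlinarith [abs_nonneg (b - a)]
      have h5 : (b - a) ^ 2 / c ≤ S k ^ 2 / c := by gcongr
      linarith
    calc ∑ k, (π0 k x * Real.log (π0 k x / π k x) - (π0 k x - π k x))
        ≤ ∑ k, S k ^ 2 / c := Finset.sum_le_sum hterm
      _ = (1 / c) * M := by
          rw [hMdef, Finset.mul_sum]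
          exact Finset.sum_congr rfl fun k _ => by ring
  -- bound on V integrand
  have hVpt : ∀ x, x ∈ X0 →
      (∑ k, π0 k x * Real.log (π0 k x / π k x) ^ 2) ≤ (1 / c ^ 2) * M := by
    intro x hx
    have hterm : ∀ k ∈ Finset.univ,
        π0 k x * Real.log (π0 k x / π k x) ^ 2 ≤ S k ^ 2 / c ^ 2 := by
      intro k _
      have hL := hlog k x hx
      have hSk := hSle k x hx
      have h1 : π0 k x * Real.log (π0 k x / π k x) ^ 2 ≤ Real.log (π0 k x / π k x) ^ 2 := by
        nlinarith [sq_nonneg (Real.log (π0 k x / π k x)), hπ01 k x hx, hπ0c k x hx]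
      have h2 : Real.log (π0 k x / π k x) ^ 2 ≤ (|π k x - π0 k x| / c) ^ 2 := by
        calc Real.log (π0 k x / π k x) ^ 2 = |Real.log (π0 k x / π k x)| ^ 2 := (sq_abs _).symm
          _ ≤ (|π k x - π0 k x| / c) ^ 2 := by
              nlinarith [abs_nonneg (Real.log (π0 k x / π k x))]
      have h3 : (|π k x - π0 k x| / c) ^ 2 ≤ S k ^ 2 / c ^ 2 := by
        rw [div_pow]
        have h4 : |π k x - π0 k x| ^ 2 ≤ S k ^ 2 := by
          nlinarith [abs_nonneg (π k x - π0 k x)]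
        gcongr
      linarith
    calc ∑ k, π0 k x * Real.log (π0 k x / π k x) ^ 2
        ≤ ∑ k, S k ^ 2 / c ^ 2 := Finset.sum_le_sum hterm
      _ = (1 / c ^ 2) * M := by
          rw [hMdef, Finset.mul_sum]
          exact Finset.sum_congr rfl fun k _ => by ring
  -- absolute bounds for integrability
  have hKabs : ∀ x, x ∈ X0 →
      ‖∑ k, π0 k x * Real.log (π0 k x / π k x)‖ ≤ (K : ℝ) / c := by
    intro x hx
    rw [Real.norm_eq_abs]
    calc |∑ k, π0 k x * Real.log (π0 k x / π k x)|
        ≤ ∑ k, |π0 k x * Real.log (π0 k x / π k x)| := Finset.abs_sum_le_sum_abs _ _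
      _ ≤ ∑ _k : Fin K, 1 / c := by
          refine Finset.sum_le_sum fun k _ => ?_
          rw [abs_mul]
          have h1 : |π0 k x| ≤ 1 := by
            rw [abs_le]; constructor
            · linarith [hπ0c k x hx]
            · exact hπ01 k x hx
          have h2 : |Real.log (π0 k x / π k x)| ≤ 1 / c := by
            calc |Real.log (π0 k x / π k x)| ≤ |π k x - π0 k x| / c := hlog k x hx
              _ ≤ 1 / c := by have hd1 := hdiff1 k x hx; gcongr
          calc |π0 k x| * |Real.log (π0 k x / π k x)| ≤ 1 * (1 / c) := by
                apply mul_le_mul h1 h2 (abs_nonneg _) zero_le_one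
            _ = 1 / c := one_mul _
      _ = (K : ℝ) / c := by simp [Finset.sum_const]; ring
  have hVabs : ∀ x, x ∈ X0 →
      ‖∑ k, π0 k x * Real.log (π0 k x / π k x) ^ 2‖ ≤ (K : ℝ) / c ^ 2 := by
    intro x hx
    rw [Real.norm_eq_abs]
    calc |∑ k, π0 k x * Real.log (π0 k x / π k x) ^ 2|
        ≤ ∑ k, |π0 k x * Real.log (π0 k x / π k x) ^ 2| := Finset.abs_sum_le_sum_abs _ _
      _ ≤ ∑ _k : Fin K, 1 / c ^ 2 := by
          refine Finset.sum_le_sum fun k _ => ?_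
          rw [abs_mul]
          have h1 : |π0 k x| ≤ 1 := by
            rw [abs_le]; constructor
            · linarith [hπ0c k x hx]
            · exact hπ01 k x hx
          have h2 : |Real.log (π0 k x / π k x) ^ 2| ≤ 1 / c ^ 2 := by
            rw [abs_of_nonneg (sq_nonneg _)]
            have hL := hlog k x hx
            have hd := hdiff1 k x hx
            have : |Real.log (π0 k x / π k x)| ≤ 1 / c := by
              calc |Real.log (π0 k x / π k x)| ≤ |π k x - π0 k x| / c := hL
                _ ≤ 1 / c := by gcongr
            calc Real.log (π0 k x / π k x) ^ 2 = |Real.log (π0 k x / π k x)| ^ 2 := (sq_abs _).symm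
              _ ≤ (1 / c) ^ 2 := by nlinarith [abs_nonneg (Real.log (π0 k x / π k x))]
              _ = 1 / c ^ 2 := by rw [div_pow, one_pow]
          calc |π0 k x| * |Real.log (π0 k x / π k x) ^ 2| ≤ 1 * (1 / c ^ 2) := by
                apply mul_le_mul h1 h2 (abs_nonneg _) zero_le_one
            _ = 1 / c ^ 2 := one_mul _
      _ = (K : ℝ) / c ^ 2 := by simp [Finset.sum_const]; ring
  -- measurability
  have hfm : Measurable fun x => ∑ k, π0 k x * Real.log (π0 k x / π k x) := by
    apply Finset.measurable_sum
    intro k _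
    exact (hπ0m k).mul (Real.measurable_log.comp ((hπ0m k).div (hπm k)))
  have hgm : Measurable fun x => ∑ k, π0 k x * Real.log (π0 k x / π k x) ^ 2 := by
    apply Finset.measurable_sum
    intro k _
    exact (hπ0m k).mul ((Real.measurable_log.comp ((hπ0m k).div (hπm k))).pow_const 2)
  -- integrability
  have hfint : Integrable (fun x => ∑ k, π0 k x * Real.log (π0 k x / π k x)) G :=
    (integrable_const ((K : ℝ) / c)).mono' hfm.aestronglyMeasurable
      (hae.mono fun x hx => hKabs x hx)
  have hgint : Integrable (fun x => ∑ k, π0 k x * Real.log (π0 k x / π k x) ^ 2) G :=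
    (integrable_const ((K : ℝ) / c ^ 2)).mono' hgm.aestronglyMeasurable
      (hae.mono fun x hx => hVabs x hx)
  -- integral bounds
  have hKint : (∫ x, ∑ k, π0 k x * Real.log (π0 k x / π k x) ∂G) ≤ (1 / c) * M := by
    have h := integral_mono_ae hfint (integrable_const ((1 / c) * M))
      (hae.mono fun x hx => hKpt x hx)
    simpa [hG.measure_univ] using h
  have hVint : (∫ x, ∑ k, π0 k x * Real.log (π0 k x / π k x) ^ 2 ∂G) ≤ (1 / c ^ 2) * M := by
    have h := integral_mono_ae hgint (integrable_const ((1 / c ^ 2) * M))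
      (hae.mono fun x hx => hVpt x hx)
    simpa [hG.measure_univ] using h
  refine max_le (hKint.trans ?_) (hVint.trans ?_)
  · have : (1 / c) ≤ 1 / c + 1 / c ^ 2 := le_add_of_nonneg_right (by positivity)
    exact mul_le_mul_of_nonneg_right this hMnn
  · have : (1 / c ^ 2) ≤ 1 / c + 1 / c ^ 2 := le_add_of_nonneg_left (by positivity)
    exact mul_le_mul_of_nonneg_right this hMnn
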